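/- arXiv:1805.10410 — 5 statements merged into one kernel-verified Lean document; each statement's English description precedes it below -/
import Mathlib

section
/- The map f_u(X) defined on SE₂(3) by f_u(X) = [[R·(ω)ₓ, R·a + g, v],[0,0,0],[0,0,0]] (where X = (R, v, p)) satisfies the group affine property: f_u(X₁X₂) = f_u(X₁)X₂ + X₁f_u(X₂) − X₁f_u(I)X₂ for all X₁, X₂ ∈ SE₂(3). -/
open Matrix

def SO3 : Set (Matrix (Fin 3) (Fin 3) ℝ) := {R | Rᵀ * R = 1 ∧ R.det = 1}

def skew (ω : Fin 3 → ℝ) : Matrix (Fin 3) (Fin 3) ℝ :=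
  !![0, -ω 2, ω 1; ω 2, 0, -ω 0; -ω 1, ω 0, 0]

def mkSE2 (R : Matrix (Fin 3) (Fin 3) ℝ) (v p : Fin 3 → ℝ) :
    Matrix (Fin 3 ⊕ Fin 2) (Fin 3 ⊕ Fin 2) ℝ :=
  Matrix.fromBlocks R (Matrix.of fun i j => ![v, p] j i) 0 1

def SE2 : Set (Matrix (Fin 3 ⊕ Fin 2) (Fin 3 ⊕ Fin 2) ℝ) :=
  {X | ∃ R v p, R ∈ SO3 ∧ X = mkSE2 R v p}

/-- The IMU–contact dynamics f_u(X) = [[R(ω)ₓ, Ra+g, v],[0,0,0],[0,0,0]],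
defined from the blocks of X = (R, v, p). -/
def fIMU (ω a g : Fin 3 → ℝ) (X : Matrix (Fin 3 ⊕ Fin 2) (Fin 3 ⊕ Fin 2) ℝ) :
    Matrix (Fin 3 ⊕ Fin 2) (Fin 3 ⊕ Fin 2) ℝ :=
  Matrix.fromBlocks (X.toBlocks₁₁ * skew ω)
    (Matrix.of fun i j =>
      ![X.toBlocks₁₁ *ᵥ a + g, fun k => X (Sum.inl k) (Sum.inr 0)] j i) 0 0

/-- f_u satisfies the group affine property on SE₂(3). -/
theorem fIMU_group_affine (ω a g : Fin 3 → ℝ) :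
    ∀ X₁ ∈ SE2, ∀ X₂ ∈ SE2,
      fIMU ω a g (X₁ * X₂) =
        fIMU ω a g X₁ * X₂ + X₁ * fIMU ω a g X₂ - X₁ * fIMU ω a g 1 * X₂ := by
  rintro X₁ ⟨R₁, v₁, p₁, -, rfl⟩ X₂ ⟨R₂, v₂, p₂, -, rfl⟩
  ext (i | i) (j | j) <;>
    simp [fIMU, mkSE2, Matrix.mul_apply, Matrix.toBlocks₁₁, Fin.sum_univ_succ,
      Matrix.one_apply, Matrix.mulVec, dotProduct] <;>
    fin_cases i <;> fin_cases j <;>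
    simp [Fin.sum_univ_succ, skew] <;> ring
end

section
/- If a dynamics f_u on a matrix Lie group G satisfies the group affine property f_u(X₁X₂) = f_u(X₁)X₂ + X₁f_u(X₂) − X₁f_u(I)X₂, and X_t, X̂_t are two trajectories satisfying dX/dt = f_{u_t}(X), then the right-invariant error η_t = X̂_t X_t⁻¹ satisfies the autonomous differential equation dη/dt = f_{u_t}(η) − η f_{u_t}(I), which does not depend on either trajectory. -/
/-!
Write `η = X̂ X⁻¹`. Differentiating, `η' = f(X̂) X⁻¹ - η f(X) X⁻¹`, and expanding
`f(X̂) = f(η X)` by the group affine property gives `f(η) X + η f(X) - η f(I) X`, so the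
`η f(X) X⁻¹` terms cancel and only `f(η) - η f(I)` is left.
-/

open Matrix

section NormedAlgebra

variable {𝕜 R : Type*} [NontriviallyNormedField 𝕜] [NormedRing R] [NormedAlgebra 𝕜 R]
  [HasSummableGeomSeries R] {x y : 𝕜 → R} {x' y' : R} {t : 𝕜}

theorem HasDerivAt.ringInverse (hx : HasDerivAt x x' t) (ht : IsUnit (x t)) :
    HasDerivAt (fun s => Ring.inverse (x s))
      (-(Ring.inverse (x t) * x' * Ring.inverse (x t))) t := by
  have h := (hasFDerivAt_ringInverse (𝕜 := 𝕜) ht.unit).comp_hasDerivAt t hx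
  rwa [← Ring.inverse_unit, IsUnit.unit_spec] at h

theorem HasDerivAt.mul_ringInverse (hy : HasDerivAt y y' t) (hx : HasDerivAt x x' t)
    (ht : IsUnit (x t)) :
    HasDerivAt (fun s => y s * Ring.inverse (x s))
      (y' * Ring.inverse (x t) - y t * Ring.inverse (x t) * x' * Ring.inverse (x t)) t :=
  (hy.mul (hx.ringInverse ht)).congr_deriv (by noncomm_ring)

end NormedAlgebra

theorem apply_mul_mul_ringInverse_sub {R : Type*} [Ring R] {F : R → R} {a x : R}
    (hx : IsUnit x) (haff : F (a * x) = F a * x + a * F x - a * F 1 * x) :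
    F (a * x) * Ring.inverse x - a * F x * Ring.inverse x = F a - a * F 1 := by
  have hcancel : x * Ring.inverse x = 1 := Ring.mul_inverse_cancel x hx
  rw [haff]
  simp only [add_mul, sub_mul, mul_assoc, hcancel, mul_one]
  abel

section LinftyOpNorm

/- `HasDerivAt` only depends on the topology, which the `L∞` operator norm shares with the
entrywise sup norm of the theorem; the operator norm makes matrices a normed ring, as the
calculus of `Ring.inverse` requires. -/

attribute [local instance] Matrix.linftyOpNormedRing Matrix.linftyOpNormedAlgebra

variable {𝕜 n : Type*} [RCLike 𝕜] [Fintype n] [DecidableEq n]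

theorem Matrix.hasDerivAt_mul_ringInverse {X Y : 𝕜 → Matrix n n 𝕜} {X' Y' : Matrix n n 𝕜} {t : 𝕜}
    (hY : HasDerivAt Y Y' t) (hX : HasDerivAt X X' t) (ht : IsUnit (X t)) :
    HasDerivAt (fun s => Y s * Ring.inverse (X s))
      (Y' * Ring.inverse (X t) - Y t * Ring.inverse (X t) * X' * Ring.inverse (X t)) t :=
  hY.mul_ringInverse hX ht

end LinftyOpNorm

attribute [local instance] Matrix.normedAddCommGroup Matrix.normedSpace

theorem right_invariant_error_autonomous_general {n : ℕ}
    (G : Set (Matrix (Fin n) (Fin n) ℝ))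
    (f : ℝ → Matrix (Fin n) (Fin n) ℝ → Matrix (Fin n) (Fin n) ℝ)
    (haff : ∀ t : ℝ, ∀ X₁ ∈ G, ∀ X₂ ∈ G,
      f t (X₁ * X₂) = f t X₁ * X₂ + X₁ * f t X₂ - X₁ * f t 1 * X₂)
    (X Xh : ℝ → Matrix (Fin n) (Fin n) ℝ)
    (hXG : ∀ t, X t ∈ G)
    (hXu : ∀ t, IsUnit (X t))
    (hX : ∀ t, HasDerivAt X (f t (X t)) t)
    (hXh : ∀ t, HasDerivAt Xh (f t (Xh t)) t)
    (η : ℝ → Matrix (Fin n) (Fin n) ℝ)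
    (hη : ∀ t, η t = Xh t * Ring.inverse (X t))
    (hηG : ∀ t, η t ∈ G) :
    ∀ t, HasDerivAt η (f t (η t) - η t * f t 1) t := by
  intro t
  have hXh_eq : Xh t = η t * X t := by
    rw [hη t, mul_assoc, Ring.inverse_mul_cancel _ (hXu t), mul_one]
  have hderiv := hasDerivAt_mul_ringInverse (hXh t) (hX t) (hXu t)
  rw [← hη t, hXh_eq, apply_mul_mul_ringInverse_sub (hXu t) (haff t _ (hηG t) _ (hXG t))] at hderiv
  exact hderiv.congr_of_eventuallyEq (Filter.Eventually.of_forall hη)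

/-- Autonomous right-invariant error dynamics for group-affine dynamics:
if f_u is group affine on G and X, X̂ are trajectories of dX/dt = f_{u_t}(X),
then η_t = X̂_t X_t⁻¹ satisfies dη/dt = f_{u_t}(η) − η f_{u_t}(I),
independently of either trajectory. -/
theorem right_invariant_error_autonomous {n : ℕ}
    (G : Set (Matrix (Fin n) (Fin n) ℝ)) (hG1 : (1 : Matrix (Fin n) (Fin n) ℝ) ∈ G)
    (f : ℝ → Matrix (Fin n) (Fin n) ℝ → Matrix (Fin n) (Fin n) ℝ)
    (haff : ∀ t : ℝ, ∀ X₁ ∈ G, ∀ X₂ ∈ G,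
      f t (X₁ * X₂) = f t X₁ * X₂ + X₁ * f t X₂ - X₁ * f t 1 * X₂)
    (X Xh : ℝ → Matrix (Fin n) (Fin n) ℝ)
    (hXG : ∀ t, X t ∈ G) (hXhG : ∀ t, Xh t ∈ G)
    (hXu : ∀ t, IsUnit (X t))
    (hX : ∀ t, HasDerivAt X (f t (X t)) t)
    (hXh : ∀ t, HasDerivAt Xh (f t (Xh t)) t)
    (η : ℝ → Matrix (Fin n) (Fin n) ℝ)
    (hη : ∀ t, η t = Xh t * Ring.inverse (X t))
    (hηG : ∀ t, η t ∈ G) :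
    ∀ t, HasDerivAt η (f t (η t) - η t * f t 1) t :=
  right_invariant_error_autonomous_general G f haff X Xh hXG hXu hX hXh η hη hηG
end

section
/- Unobservability of absolute position: for the measurement matrix H = [0, 0, −I, I] (3×12 in 3×3 blocks) and the state transition matrix Φ = exp_m(AΔt) with A as in the contact-inertial error dynamics, every row of HΦᵏ (for all k ≥ 0) annihilates any vector of the form (0, 0, w, w) with w ∈ ℝ³; hence the observability matrix with block rows HΦᵏ has kernel containing the 3-dimensional subspace {(0,0,w,w) : w ∈ ℝ³}. -/
open Matrix

def b2m (B : Fin 4 → Fin 4 → Matrix (Fin 3) (Fin 3) ℝ) :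
    Matrix (Fin 4 × Fin 3) (Fin 4 × Fin 3) ℝ :=
  Matrix.of fun i j => B i.1 j.1 i.2 j.2

def Amat (g : Fin 3 → ℝ) : Matrix (Fin 4 × Fin 3) (Fin 4 × Fin 3) ℝ :=
  b2m ![![0, 0, 0, 0], ![skew g, 0, 0, 0], ![0, 1, 0, 0], ![0, 0, 0, 0]]

/-- Measurement matrix H = [0 0 −I I]. -/
def Hmat : Matrix (Fin 3) (Fin 4 × Fin 3) ℝ :=
  Matrix.of fun i j => (![0, 0, -1, 1] j.1 : Matrix (Fin 3) (Fin 3) ℝ) i j.2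

lemma Amat_mulVec (g : Fin 3 → ℝ) (w : Fin 3 → ℝ) :
    Amat g *ᵥ (fun p : Fin 4 × Fin 3 => ![(0 : Fin 3 → ℝ), 0, w, w] p.1 p.2) = 0 := by
  funext p
  obtain ⟨i, a⟩ := p
  simp only [mulVec, dotProduct, Fintype.sum_prod_type, Amat, b2m, Matrix.of_apply]
  rw [Fin.sum_univ_four]
  fin_cases i <;> simp [skew, Matrix.vecHead, Matrix.vecTail]

lemma exp_mulVec (g : Fin 3 → ℝ) (Δt : ℝ) (w : Fin 3 → ℝ) :
    NormedSpace.exp (Δt • Amat g) *ᵥ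
      (fun p : Fin 4 × Fin 3 => ![(0 : Fin 3 → ℝ), 0, w, w] p.1 p.2) =
      (fun p : Fin 4 × Fin 3 => ![(0 : Fin 3 → ℝ), 0, w, w] p.1 p.2) := by
  letI : SeminormedRing (Matrix (Fin 4 × Fin 3) (Fin 4 × Fin 3) ℝ) :=
    Matrix.linftyOpSemiNormedRing
  letI : NormedRing (Matrix (Fin 4 × Fin 3) (Fin 4 × Fin 3) ℝ) := Matrix.linftyOpNormedRing
  letI : NormedAlgebra ℝ (Matrix (Fin 4 × Fin 3) (Fin 4 × Fin 3) ℝ) :=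
    Matrix.linftyOpNormedAlgebra
  set v : (Fin 4 × Fin 3) → ℝ := fun p => ![(0 : Fin 3 → ℝ), 0, w, w] p.1 p.2 with hv
  set M := Δt • Amat g with hM
  have hMv : M *ᵥ v = 0 := by
    rw [hM, smul_mulVec, Amat_mulVec, smul_zero]
  have hpow : ∀ n : ℕ, M ^ (n + 1) *ᵥ v = 0 := by
    intro n
    induction n with
    | zero => simpa using hMv
    | succ n ih =>
      rw [pow_succ, ← mulVec_mulVec, hMv, mulVec_zero]
  let f : Matrix (Fin 4 × Fin 3) (Fin 4 × Fin 3) ℝ →ₗ[ℝ] ((Fin 4 × Fin 3) → ℝ) :=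
    { toFun := fun X => X *ᵥ v
      map_add' := fun X Y => add_mulVec X Y v
      map_smul' := fun c X => smul_mulVec c X v }
  have hf : Continuous f := LinearMap.continuous_of_finiteDimensional f
  rw [NormedSpace.exp_eq_tsum ℝ]
  have hs : Summable fun n : ℕ => (((n.factorial : ℝ))⁻¹ : ℝ) • M ^ n := NormedSpace.expSeries_summable' M
  have : (∑' n : ℕ, (((n.factorial : ℝ))⁻¹ : ℝ) • M ^ n) *ᵥ v
      = ∑' n : ℕ, f ((((n.factorial : ℝ))⁻¹ : ℝ) • M ^ n) := by
    exact (hs.hasSum.map f hf).tsum_eq.symm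
  rw [this]
  have heq : ∀ n : ℕ, f ((((n.factorial : ℝ))⁻¹ : ℝ) • M ^ n) = if n = 0 then v else 0 := by
    intro n
    cases n with
    | zero => simp [f]
    | succ n =>
      simp only [f, LinearMap.coe_mk, AddHom.coe_mk, smul_mulVec, hpow n]
      simp
  simp_rw [heq]
  rw [tsum_eq_single 0 (by intro b hb; simp [hb])]
  simp

/-- Unobservability of absolute position: every block row HΦᵏ of the observability
matrix annihilates the vectors (0, 0, w, w). -/
theorem position_unobservable (g : Fin 3 → ℝ) (Δt : ℝ) :
    ∀ (k : ℕ) (w : Fin 3 → ℝ),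
      (Hmat * NormedSpace.exp (Δt • Amat g) ^ k) *ᵥ
        (fun p : Fin 4 × Fin 3 => ![(0 : Fin 3 → ℝ), 0, w, w] p.1 p.2) = 0 := by
  intro k w
  have hpow : ∀ k : ℕ, NormedSpace.exp (Δt • Amat g) ^ k *ᵥ
      (fun p : Fin 4 × Fin 3 => ![(0 : Fin 3 → ℝ), 0, w, w] p.1 p.2) =
      (fun p : Fin 4 × Fin 3 => ![(0 : Fin 3 → ℝ), 0, w, w] p.1 p.2) := by
    intro k
    induction k with
    | zero => simp
    | succ k ih => rw [pow_succ, ← mulVec_mulVec, exp_mulVec, ih]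
  rw [← mulVec_mulVec, hpow]
  funext i
  simp only [mulVec, dotProduct, Fintype.sum_prod_type, Hmat, Matrix.of_apply]
  rw [Fin.sum_univ_four]
  simp [Matrix.one_apply, Matrix.vecHead, Matrix.vecTail]
end

section
/- Unobservability of yaw: with g = (0,0,−g₃) the gravity vector and H, Φ as in the contact-inertial error system, the vector (e₃, 0, 0, 0) ∈ ℝ¹² (e₃ the third standard basis vector placed in the orientation block) lies in the kernel of HΦᵏ for every k ≥ 0; i.e., rotation about the gravity axis is unobservable. -/
open Matrix

/-! Since g is parallel to e₃, the block (g)ₓ of A sends e₃ to g × e₃ = 0, so A kills the yaw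
vector v = (e₃, 0, 0, 0). Hence only the identity term of the exponential series acts on v,
Φᵏ = exp (kΔt A) fixes v, and H v = 0 because H reads only the last two blocks. -/

open scoped Norms.Operator in
theorem Matrix.exp_mulVec_of_mulVec_eq_zero {𝕂 n : Type*} [RCLike 𝕂] [Fintype n] [DecidableEq n]
    {M : Matrix n n 𝕂} {v : n → 𝕂} (h : M *ᵥ v = 0) : NormedSpace.exp M *ᵥ v = v := by
  have hseries := (NormedSpace.exp_series_hasSum_exp' (𝕂 := 𝕂) M).map
    (mulVec.addMonoidHomLeft v) (continuous_id.matrix_mulVec continuous_const)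
  refine hseries.unique (hasSum_single 0 fun m hm => ?_) |>.trans ?_
  · obtain ⟨m, rfl⟩ := Nat.exists_eq_succ_of_ne_zero hm
    simp only [Function.comp_apply, mulVec.addMonoidHomLeft, AddMonoidHom.coe_mk, ZeroHom.coe_mk]
    rw [pow_succ, smul_mulVec, ← mulVec_mulVec, h, mulVec_zero, smul_zero]
  · simp [mulVec.addMonoidHomLeft]

theorem skew_mulVec (ω v : Fin 3 → ℝ) : skew ω *ᵥ v = ω ⨯₃ v := by
  ext i
  fin_cases i <;> simp [skew, cross_apply, mulVec, dotProduct, Fin.sum_univ_three] <;> ring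

theorem Amat_mulVec_orientation {g v : Fin 3 → ℝ} (h : g ⨯₃ v = 0) :
    Amat g *ᵥ (fun p : Fin 4 × Fin 3 => ![v, 0, 0, 0] p.1 p.2) = 0 := by
  have hv : ∀ j, ∑ k, skew g j k * v k = 0 := congrFun ((skew_mulVec g v).trans h)
  ext ⟨i, j⟩
  fin_cases i <;>
    simp [Amat, b2m, mulVec, dotProduct, Fintype.sum_prod_type, Fin.sum_univ_four, hv]

theorem Hmat_mulVec_orientation (v : Fin 3 → ℝ) :
    Hmat *ᵥ (fun p : Fin 4 × Fin 3 => ![v, 0, 0, 0] p.1 p.2) = 0 := by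
  ext i
  simp [Hmat, mulVec, dotProduct, Fintype.sum_prod_type, Fin.sum_univ_four]

/-- Unobservability of yaw: with gravity g = (0,0,−g₃), the vector (e₃,0,0,0)
lies in the kernel of every block row HΦᵏ of the observability matrix. -/
theorem yaw_unobservable (g₃ : ℝ) (Δt : ℝ) :
    ∀ k : ℕ,
      (Hmat * NormedSpace.exp (Δt • Amat ![0, 0, -g₃]) ^ k) *ᵥ
        (fun p : Fin 4 × Fin 3 => ![(![0, 0, 1] : Fin 3 → ℝ), 0, 0, 0] p.1 p.2) = 0 := by
  intro k
  have hgravity : ![0, 0, -g₃] ⨯₃ ![0, 0, 1] = 0 := by simp [cross_apply]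
  have hfixed := exp_mulVec_of_mulVec_eq_zero (M := (k : ℝ) • Δt • Amat ![0, 0, -g₃])
    (by rw [smul_mulVec, smul_mulVec, Amat_mulVec_orientation hgravity, smul_zero, smul_zero])
  rw [← mulVec_mulVec, ← exp_nsmul, ← Nat.cast_smul_eq_nsmul ℝ, hfixed, Hmat_mulVec_orientation]
end

section
/- The kernel of the observability matrix of the contact-inertial linear error system (block rows HΦᵏ, k ≥ 0, with H = [0,0,−I,I] and Φ = exp_m(AΔt), Δt ≠ 0, g ≠ 0) is exactly 4-dimensional, spanned by (0,0,w,w) for w ∈ ℝ³ together with (ĝ,0,0,0) where ĝ = g/‖g‖. -/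
open Matrix

/-- (0,0,w,w) vectors. -/
def vpos (w : Fin 3 → ℝ) : Fin 4 × Fin 3 → ℝ :=
  fun p => ![(0 : Fin 3 → ℝ), 0, w, w] p.1 p.2

/-- (ĝ,0,0,0) with ĝ = g/‖g‖ (Euclidean norm). -/
noncomputable def vyaw (g : Fin 3 → ℝ) : Fin 4 × Fin 3 → ℝ :=
  fun p => ![(Real.sqrt (g 0 ^ 2 + g 1 ^ 2 + g 2 ^ 2))⁻¹ • g, 0, 0, 0] p.1 p.2

/-!
`Amat g` is nilpotent, `Amat g ^ 3 = 0`, so `Φᵏ = exp (kΔt • A) = 1 + kΔt • A + (kΔt)²/2 • A²` and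
the `k`-th block row of the observability matrix sends `x = (x₀, x₁, x₂, x₃)` to
`(x₃ - x₂) - kΔt • x₁ - (kΔt)²/2 • g ⨯₃ x₀`. Since `Δt ≠ 0`, this quadratic in `k` vanishes for
all `k` only if its three coefficients do: `x₃ = x₂`, `x₁ = 0` and `x₀ ∥ g`. These states are
parametrised bijectively by `(w, t) ↦ (0, 0, w, w) + t • (ĝ, 0, 0, 0)`, giving dimension `3 + 1`.
-/

theorem NormedSpace.exp_eq_sum_range_of_pow_eq_zero (𝕂 : Type*) {𝔸 : Type*} [Field 𝕂]
    [CharZero 𝕂] [Ring 𝔸] [Algebra 𝕂 𝔸] [TopologicalSpace 𝔸] [IsTopologicalRing 𝔸] {x : 𝔸} {n : ℕ}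
    (hx : x ^ n = 0) : NormedSpace.exp x = ∑ i ∈ Finset.range n, (i.factorial⁻¹ : 𝕂) • x ^ i := by
  rw [NormedSpace.exp_eq_tsum 𝕂]
  refine tsum_eq_sum fun i hi => ?_
  rw [pow_eq_zero_of_le (by simpa using hi) hx, smul_zero]

theorem NormedSpace.exp_smul_of_pow_three_eq_zero {𝕂 𝔸 : Type*} [Field 𝕂] [CharZero 𝕂]
    [Ring 𝔸] [Algebra 𝕂 𝔸] [TopologicalSpace 𝔸] [IsTopologicalRing 𝔸] {N : 𝔸} (hN : N ^ 3 = 0)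
    (c : 𝕂) :
    NormedSpace.exp (c • N) = 1 + c • N + (c ^ 2 / 2) • N ^ 2 := by
  rw [NormedSpace.exp_eq_sum_range_of_pow_eq_zero 𝕂 (n := 3) (by rw [smul_pow, hN, smul_zero])]
  simp [Finset.sum_range_succ, smul_pow, smul_smul, div_eq_inv_mul, mul_comm]

theorem eq_zero_of_forall_quadratic_eq_zero {K V : Type*} [Field K] [CharZero K] [AddCommGroup V]
    [Module K V] {d : K} (hd : d ≠ 0) {a b c : V}
    (h : ∀ k : ℕ, a - (k * d) • b - ((k * d) ^ 2 / 2) • c = 0) : a = 0 ∧ b = 0 ∧ c = 0 := by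
  have ha : a = 0 := by simpa using h 0
  have h1 := h 1
  have h2 := h 2
  have hc : (d ^ 2) • c = 0 := by linear_combination (norm := module) 2 • h1 - h2 - ha
  have hc' : c = 0 := (smul_eq_zero.mp hc).resolve_left (pow_ne_zero 2 hd)
  have hb : d • b = 0 := by linear_combination (norm := module) ha - h1 - (d ^ 2 / 2) • hc'
  exact ⟨ha, (smul_eq_zero.mp hb).resolve_left hd, hc'⟩

theorem cross_eq_zero_iff_exists_eq_smul {K : Type*} [Field K] [LinearOrder K]
    [IsStrictOrderedRing K] {u v : Fin 3 → K} (hu : u ≠ 0) :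
    u ⨯₃ v = 0 ↔ ∃ t : K, v = t • u := by
  constructor
  · intro h
    have huu : u ⬝ᵥ u ≠ 0 := mt dotProduct_self_eq_zero.mp hu
    have := cross_cross_eq_smul_sub_smul' u u v
    rw [h, map_zero, eq_comm, sub_eq_zero] at this
    refine ⟨(u ⬝ᵥ v) / (u ⬝ᵥ u), ?_⟩
    rw [div_eq_inv_mul, mul_smul, this, smul_smul, inv_mul_cancel₀ huu, one_smul]
  · rintro ⟨t, rfl⟩
    rw [map_smul, cross_self, smul_zero]

theorem b2m_mulVec (B : Fin 4 → Fin 4 → Matrix (Fin 3) (Fin 3) ℝ) (x : Fin 4 × Fin 3 → ℝ) :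
    b2m B *ᵥ x = Function.uncurry fun i => ∑ k, B i k *ᵥ x.curry k := by
  ext ⟨i, j⟩
  simp [b2m, mulVec, dotProduct, Fintype.sum_prod_type, Finset.sum_apply]

theorem Hmat_mulVec (x : Fin 4 × Fin 3 → ℝ) : Hmat *ᵥ x = x.curry 3 - x.curry 2 := by
  ext i
  simp only [Hmat, mulVec, dotProduct, Fintype.sum_prod_type, Fin.sum_univ_four, of_apply,
    cons_val]
  simp [one_apply, sub_eq_neg_add]

theorem Amat_mulVec_s14 (g : Fin 3 → ℝ) (x : Fin 4 × Fin 3 → ℝ) :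
    Amat g *ᵥ x = Function.uncurry ![(0 : Fin 3 → ℝ), g ⨯₃ x.curry 0, x.curry 1, 0] := by
  rw [Amat, b2m_mulVec]
  congr 1
  ext i : 1
  fin_cases i <;> simp [Fin.sum_univ_four, skew_mulVec]

theorem Amat_sq_mulVec (g : Fin 3 → ℝ) (x : Fin 4 × Fin 3 → ℝ) :
    Amat g ^ 2 *ᵥ x = Function.uncurry ![(0 : Fin 3 → ℝ), 0, g ⨯₃ x.curry 0, 0] := by
  rw [sq, ← mulVec_mulVec, Amat_mulVec_s14, Amat_mulVec_s14]
  ext ⟨i, j⟩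
  fin_cases i <;> simp

theorem Amat_pow_three (g : Fin 3 → ℝ) : Amat g ^ 3 = 0 := by
  refine ext_iff_mulVec.mpr fun x => ?_
  rw [pow_succ, ← mulVec_mulVec, Amat_sq_mulVec, Amat_mulVec_s14]
  ext ⟨i, j⟩
  fin_cases i <;> simp

theorem Hmat_mul_exp_pow_mulVec (g : Fin 3 → ℝ) (Δt : ℝ) (k : ℕ) (x : Fin 4 × Fin 3 → ℝ) :
    (Hmat * NormedSpace.exp (Δt • Amat g) ^ k) *ᵥ x =
      (x.curry 3 - x.curry 2) - (k * Δt) • x.curry 1 - ((k * Δt) ^ 2 / 2) • g ⨯₃ x.curry 0 := by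
  rw [← Matrix.exp_nsmul, ← Nat.cast_smul_eq_nsmul ℝ, smul_smul,
    NormedSpace.exp_smul_of_pow_three_eq_zero (Amat_pow_three g), ← mulVec_mulVec, add_mulVec,
    add_mulVec, one_mulVec, smul_mulVec, smul_mulVec, Amat_mulVec_s14, Amat_sq_mulVec, mulVec_add,
    mulVec_add, mulVec_smul, mulVec_smul, Hmat_mulVec, Hmat_mulVec, Hmat_mulVec]
  simp only [Function.curry_uncurry, cons_val]
  module

noncomputable def observabilityKernel (g : Fin 3 → ℝ) (Δt : ℝ) :
    Submodule ℝ (Fin 4 × Fin 3 → ℝ) :=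
  ⨅ k : ℕ, LinearMap.ker (Hmat * NormedSpace.exp (Δt • Amat g) ^ k).mulVecLin

theorem mem_observabilityKernel_iff {g : Fin 3 → ℝ} {Δt : ℝ} (hΔt : Δt ≠ 0)
    {x : Fin 4 × Fin 3 → ℝ} :
    x ∈ observabilityKernel g Δt ↔
      x.curry 3 = x.curry 2 ∧ x.curry 1 = 0 ∧ g ⨯₃ x.curry 0 = 0 := by
  simp only [observabilityKernel, Submodule.mem_iInf, LinearMap.mem_ker, mulVecLin_apply,
    Hmat_mul_exp_pow_mulVec]
  constructor
  · intro h
    obtain ⟨h32, h1, h0⟩ := eq_zero_of_forall_quadratic_eq_zero hΔt h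
    exact ⟨sub_eq_zero.mp h32, h1, h0⟩
  · rintro ⟨h32, h1, h0⟩ k
    simp [h32, h1, h0]

theorem sqrt_sum_sq_ne_zero {g : Fin 3 → ℝ} (hg : g ≠ 0) :
    Real.sqrt (g 0 ^ 2 + g 1 ^ 2 + g 2 ^ 2) ≠ 0 := by
  have hgg : g ⬝ᵥ g ≠ 0 := mt dotProduct_self_eq_zero.mp hg
  rw [vec3_dotProduct, ← sq, ← sq, ← sq] at hgg
  exact Real.sqrt_ne_zero'.mpr (lt_of_le_of_ne (by positivity) hgg.symm)

def vposLinear : (Fin 3 → ℝ) →ₗ[ℝ] (Fin 4 × Fin 3 → ℝ) where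
  toFun := vpos
  map_add' v w := by
    ext ⟨i, j⟩
    fin_cases i <;> simp [vpos]
  map_smul' c w := by
    ext ⟨i, j⟩
    fin_cases i <;> simp [vpos]

noncomputable def kernelParam (g : Fin 3 → ℝ) : (Fin 3 → ℝ) × ℝ →ₗ[ℝ] (Fin 4 × Fin 3 → ℝ) :=
  vposLinear.coprod (LinearMap.toSpanSingleton ℝ _ (vyaw g))

theorem kernelParam_apply (g w : Fin 3 → ℝ) (t : ℝ) :
    kernelParam g (w, t) = vpos w + t • vyaw g := rfl

theorem range_kernelParam (g : Fin 3 → ℝ) :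
    LinearMap.range (kernelParam g) = Submodule.span ℝ ({x | ∃ w, x = vpos w} ∪ {vyaw g}) := by
  have hvpos : {x | ∃ w, x = vpos w} = (LinearMap.range vposLinear : Set _) := by
    ext x
    simp [eq_comm, vposLinear]
  rw [kernelParam, LinearMap.range_coprod, Submodule.span_union, hvpos, Submodule.span_eq,
    LinearMap.span_singleton_eq_range]

theorem kernelParam_injective {g : Fin 3 → ℝ} (hg : g ≠ 0) :
    Function.Injective (kernelParam g) := by
  rw [← LinearMap.ker_eq_bot, Submodule.eq_bot_iff]
  rintro ⟨w, t⟩ h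
  rw [LinearMap.mem_ker, kernelParam_apply] at h
  have hw : w = 0 := by
    ext j
    simpa [vpos, vyaw] using congrFun h (2, j)
  have ht : t • (Real.sqrt (g 0 ^ 2 + g 1 ^ 2 + g 2 ^ 2))⁻¹ • g = 0 := by
    ext j
    simpa [vpos, vyaw] using congrFun h (0, j)
  simp only [smul_eq_zero, inv_eq_zero, sqrt_sum_sq_ne_zero hg, hg, or_false] at ht
  simp [hw, ht]

theorem observabilityKernel_eq_range_kernelParam {g : Fin 3 → ℝ} (hg : g ≠ 0) {Δt : ℝ}
    (hΔt : Δt ≠ 0) : observabilityKernel g Δt = LinearMap.range (kernelParam g) := by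
  ext x
  rw [mem_observabilityKernel_iff hΔt, LinearMap.mem_range]
  constructor
  · rintro ⟨h32, h1, h0⟩
    obtain ⟨t, ht⟩ := (cross_eq_zero_iff_exists_eq_smul hg).mp h0
    refine ⟨(x.curry 2, t * Real.sqrt (g 0 ^ 2 + g 1 ^ 2 + g 2 ^ 2)), ?_⟩
    ext ⟨i, j⟩
    fin_cases i
    · have hx0 : x (0, j) = t * g j := congrFun ht j
      simp [kernelParam_apply, vpos, vyaw, hx0, mul_assoc, sqrt_sum_sq_ne_zero hg]
    · simpa [kernelParam_apply, vpos, vyaw] using (congrFun h1 j).symm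
    · simp [kernelParam_apply, vpos, vyaw]
    · simpa [kernelParam_apply, vpos, vyaw] using (congrFun h32 j).symm
  · rintro ⟨⟨w, t⟩, rfl⟩
    refine ⟨?_, ?_, ?_⟩
    · ext j; simp [kernelParam_apply, vpos, vyaw]
    · ext j; simp [kernelParam_apply, vpos, vyaw]
    · rw [cross_eq_zero_iff_exists_eq_smul hg]
      refine ⟨t * (Real.sqrt (g 0 ^ 2 + g 1 ^ 2 + g 2 ^ 2))⁻¹, ?_⟩
      ext j; simp [kernelParam_apply, vpos, vyaw, mul_assoc]

/-- The kernel of the observability matrix is exactly the 4-dimensional subspace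
spanned by the (0,0,w,w) together with (ĝ,0,0,0). -/
theorem observability_kernel (g : Fin 3 → ℝ) (hg : g ≠ 0) (Δt : ℝ) (hΔt : Δt ≠ 0) :
    (⨅ k : ℕ,
        LinearMap.ker (Hmat * NormedSpace.exp (Δt • Amat g) ^ k).mulVecLin) =
      Submodule.span ℝ ({x | ∃ w : Fin 3 → ℝ, x = vpos w} ∪ {vyaw g}) ∧
    Module.finrank ℝ
      ↥(⨅ k : ℕ,
        LinearMap.ker (Hmat * NormedSpace.exp (Δt • Amat g) ^ k).mulVecLin) = 4 := by
  have hK : observabilityKernel g Δt = LinearMap.range (kernelParam g) :=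
    observabilityKernel_eq_range_kernelParam hg hΔt
  refine ⟨hK.trans (range_kernelParam g), ?_⟩
  change Module.finrank ℝ (observabilityKernel g Δt) = 4
  rw [hK, LinearMap.finrank_range_of_inj (kernelParam_injective hg), Module.finrank_prod,
    Module.finrank_fin_fun, Module.finrank_self]
end
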